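/- Let X be an m×n matrix with reduced SVD X = U S Vᵀ, and let T = {U Aᵀ + B Vᵀ : A ∈ ℝ^{n×r}, B ∈ ℝ^{m×r}}. Then the orthogonal projection (with respect to the Frobenius inner product) of any matrix Z onto T is P_T(Z) = U Uᵀ Z + Z V Vᵀ − U Uᵀ Z V Vᵀ, and the projection onto the orthogonal complement is P_{T⊥}(Z) = (I − U Uᵀ) Z (I − V Vᵀ). -/

import Mathlib

/-! The residual `Z - P_T(Z)` factors as `(1 - U Uᵀ) Z (1 - V Vᵀ)`, and `Uᵀ (1 - U Uᵀ) = 0`,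
`(1 - V Vᵀ) V = 0` because `U`, `V` have orthonormal columns. So the residual is annihilated by
`Uᵀ` on the left and by `V` on the right, which by cyclicity of the trace makes it
Frobenius-orthogonal to every `U Aᵀ + B Vᵀ`. -/

noncomputable section
open Matrix BigOperators

/-- Frobenius (trace) inner product of two real matrices. -/
def frobInner {m n : ℕ} (A B : Matrix (Fin m) (Fin n) ℝ) : ℝ := (Aᵀ * B).trace

/-- Singular values of a real matrix: square roots of the eigenvalues of `Xᴴ * X`. -/
def singularValues {m n : ℕ} (X : Matrix (Fin m) (Fin n) ℝ) : Fin n → ℝ :=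
  fun i => Real.sqrt ((Matrix.isHermitian_conjTranspose_mul_self X : (Xᵀ * X).IsHermitian).eigenvalues i)

/-- Nuclear norm: sum of singular values. -/
def nuclearNorm {m n : ℕ} (X : Matrix (Fin m) (Fin n) ℝ) : ℝ := ∑ i, singularValues X i

/-- Operator norm: largest singular value. -/
def opNorm {m n : ℕ} (X : Matrix (Fin m) (Fin n) ℝ) : ℝ := ⨆ i, singularValues X i

namespace Matrix

variable {R : Type*} {m n r : Type*} [Fintype m] [Fintype n] [Fintype r]

theorem sub_orthProj_eq_one_sub_mul_mul_one_sub [Ring R] [DecidableEq m] [DecidableEq n]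
    (U : Matrix m r R) (V : Matrix n r R) (Z : Matrix m n R) :
    Z - (U * Uᵀ * Z + Z * V * Vᵀ - U * Uᵀ * Z * V * Vᵀ)
      = (1 - U * Uᵀ) * Z * (1 - V * Vᵀ) := by
  simp only [Matrix.sub_mul, Matrix.mul_sub, Matrix.one_mul, Matrix.mul_one, Matrix.mul_assoc]
  abel

theorem orthProj_eq_mul_transpose_add_mul_transpose [CommRing R] [DecidableEq m]
    (U : Matrix m r R) (V : Matrix n r R) (Z : Matrix m n R) :
    U * Uᵀ * Z + Z * V * Vᵀ - U * Uᵀ * Z * V * Vᵀ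
      = U * (Zᵀ * U)ᵀ + ((1 - U * Uᵀ) * Z * V) * Vᵀ := by
  simp only [transpose_mul, transpose_transpose, Matrix.sub_mul, Matrix.one_mul,
    Matrix.mul_assoc]
  abel

theorem transpose_mul_one_sub_mul_transpose [Ring R] [DecidableEq m] [DecidableEq r]
    {U : Matrix m r R} (hU : Uᵀ * U = 1) :
    Uᵀ * (1 - U * Uᵀ) = 0 := by
  rw [Matrix.mul_sub, Matrix.mul_one, ← Matrix.mul_assoc, hU, Matrix.one_mul, sub_self]

theorem one_sub_mul_transpose_mul [Ring R] [DecidableEq n] [DecidableEq r]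
    {V : Matrix n r R} (hV : Vᵀ * V = 1) :
    (1 - V * Vᵀ) * V = 0 := by
  rw [Matrix.sub_mul, Matrix.one_mul, Matrix.mul_assoc, hV, Matrix.mul_one, sub_self]

end Matrix

theorem frobInner_mul_transpose_add_mul_transpose_eq_zero {m n r : ℕ}
    {W : Matrix (Fin m) (Fin n) ℝ} {U : Matrix (Fin m) (Fin r) ℝ} {V : Matrix (Fin n) (Fin r) ℝ}
    (hUW : Uᵀ * W = 0) (hWV : W * V = 0)
    (A : Matrix (Fin n) (Fin r) ℝ) (B : Matrix (Fin m) (Fin r) ℝ) :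
    frobInner W (U * Aᵀ + B * Vᵀ) = 0 := by
  have hWU : Wᵀ * U = 0 := by rw [← transpose_transpose U, ← transpose_mul, hUW, transpose_zero]
  have hVW : Vᵀ * Wᵀ = 0 := by rw [← transpose_mul, hWV, transpose_zero]
  rw [frobInner, Matrix.mul_add, trace_add, ← Matrix.mul_assoc, hWU, Matrix.zero_mul,
    trace_zero, ← Matrix.mul_assoc, trace_mul_comm, ← Matrix.mul_assoc, hVW, Matrix.zero_mul,
    trace_zero, add_zero]

theorem projection_onto_T_general
    {m n r : ℕ}
    (U : Matrix (Fin m) (Fin r) ℝ)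
    (V : Matrix (Fin n) (Fin r) ℝ)
    (hU : Uᵀ * U = 1) (hV : Vᵀ * V = 1)
    (Z : Matrix (Fin m) (Fin n) ℝ) :
    (∃ A : Matrix (Fin n) (Fin r) ℝ, ∃ B : Matrix (Fin m) (Fin r) ℝ,
        U * Uᵀ * Z + Z * V * Vᵀ - U * Uᵀ * Z * V * Vᵀ = U * Aᵀ + B * Vᵀ) ∧
    (∀ (A : Matrix (Fin n) (Fin r) ℝ) (B : Matrix (Fin m) (Fin r) ℝ),
        frobInner (Z - (U * Uᵀ * Z + Z * V * Vᵀ - U * Uᵀ * Z * V * Vᵀ))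
          (U * Aᵀ + B * Vᵀ) = 0) ∧
    Z - (U * Uᵀ * Z + Z * V * Vᵀ - U * Uᵀ * Z * V * Vᵀ)
      = (1 - U * Uᵀ) * Z * (1 - V * Vᵀ) := by
  have hres := sub_orthProj_eq_one_sub_mul_mul_one_sub U V Z
  refine ⟨⟨_, _, orthProj_eq_mul_transpose_add_mul_transpose U V Z⟩, fun A B => ?_, hres⟩
  rw [hres]
  refine frobInner_mul_transpose_add_mul_transpose_eq_zero ?_ ?_ A B
  · rw [← Matrix.mul_assoc, ← Matrix.mul_assoc, transpose_mul_one_sub_mul_transpose hU,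
      Matrix.zero_mul, Matrix.zero_mul]
  · rw [Matrix.mul_assoc, one_sub_mul_transpose_mul hV, Matrix.mul_zero]

/-- With `T = {U Aᵀ + B Vᵀ}`, the orthogonal projection (w.r.t. the
Frobenius inner product) of `Z` onto `T` is `U Uᵀ Z + Z V Vᵀ − U Uᵀ Z V Vᵀ`, i.e. this
matrix lies in `T` and the residual is Frobenius-orthogonal to `T`; and the projection
onto the orthogonal complement is `(I − U Uᵀ) Z (I − V Vᵀ)`. -/
theorem projection_onto_T
    {m n r : ℕ} (X : Matrix (Fin m) (Fin n) ℝ)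
    (U : Matrix (Fin m) (Fin r) ℝ) (S : Matrix (Fin r) (Fin r) ℝ)
    (V : Matrix (Fin n) (Fin r) ℝ)
    (hU : Uᵀ * U = 1) (hV : Vᵀ * V = 1)
    (hSdiag : ∀ i j : Fin r, i ≠ j → S i j = 0)
    (hSpos : ∀ i : Fin r, 0 < S i i)
    (hX : X = U * S * Vᵀ)
    (Z : Matrix (Fin m) (Fin n) ℝ) :
    (∃ A : Matrix (Fin n) (Fin r) ℝ, ∃ B : Matrix (Fin m) (Fin r) ℝ,
        U * Uᵀ * Z + Z * V * Vᵀ - U * Uᵀ * Z * V * Vᵀ = U * Aᵀ + B * Vᵀ) ∧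
    (∀ (A : Matrix (Fin n) (Fin r) ℝ) (B : Matrix (Fin m) (Fin r) ℝ),
        frobInner (Z - (U * Uᵀ * Z + Z * V * Vᵀ - U * Uᵀ * Z * V * Vᵀ))
          (U * Aᵀ + B * Vᵀ) = 0) ∧
    Z - (U * Uᵀ * Z + Z * V * Vᵀ - U * Uᵀ * Z * V * Vᵀ)
      = (1 - U * Uᵀ) * Z * (1 - V * Vᵀ) :=
  projection_onto_T_general U V hU hV Z
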